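/- Fix an integer a ≥ 2, 1 ≤ i ≤ a−1, and work in A_ħ = A(ℂ[ħ], ħ). Let g ∈ ℂ[ħ][y_1,…,y_a] be a polynomial invariant under the transposition of the variables y_i and y_{i+1}. Then there exist N ∈ ℕ and polynomials p_0, …, p_{N−1} ∈ ℂ[ħ][y_1,…,y_a] such that φ(g)·s_i = s_i·φ(g) + Σ_{j=0}^{N−1} y_i^j · e_i · φ(p_j) in A_ħ (and one may take N to be the total degree of g). -/

import Mathlib

/-- Generators of the (affine) VW superalgebra on `a` strands:
`s i`, `e i` for `i : Fin (a-1)` (0-based, so `s i` is the paper's `s_{i+1}`),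
and `y j` for `j : Fin a` (0-based, so `y j` is the paper's `y_{j+1}`). -/
inductive VWGen (a : ℕ) : Type
  | s : Fin (a - 1) → VWGen a
  | e : Fin (a - 1) → VWGen a
  | y : Fin a → VWGen a

/-- The generator `s_i` inside the free algebra. -/
noncomputable def Sf (a : ℕ) (R : Type) [CommRing R] (i : Fin (a - 1)) :
    FreeAlgebra R (VWGen a) := FreeAlgebra.ι R (VWGen.s i)

/-- The generator `e_i` inside the free algebra. -/
noncomputable def Ef (a : ℕ) (R : Type) [CommRing R] (i : Fin (a - 1)) :
    FreeAlgebra R (VWGen a) := FreeAlgebra.ι R (VWGen.e i)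

/-- The generator `y_j` inside the free algebra. -/
noncomputable def Yf (a : ℕ) (R : Type) [CommRing R] (j : Fin a) :
    FreeAlgebra R (VWGen a) := FreeAlgebra.ι R (VWGen.y j)

/-- The scalar `hb` inside the free algebra. -/
noncomputable def Hf (a : ℕ) (R : Type) [CommRing R] (hb : R) :
    FreeAlgebra R (VWGen a) := algebraMap R (FreeAlgebra R (VWGen a)) hb

/-- The defining relations (VW1)-(VW9) of the affine VW superalgebra `A(R,hb)`
(all indices are 0-based translations of the 1-based indices of the paper). -/
inductive VWRel (a : ℕ) (R : Type) [CommRing R] (hb : R) :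
    FreeAlgebra R (VWGen a) → FreeAlgebra R (VWGen a) → Prop
  -- (VW1)
  | vw1 (i : Fin (a - 1)) : VWRel a R hb (Sf a R i * Sf a R i) 1
  -- (VW2)
  | vw2a (i j : Fin (a - 1)) (h : (i : ℕ) + 1 < j ∨ (j : ℕ) + 1 < i) :
      VWRel a R hb (Sf a R i * Ef a R j) (Ef a R j * Sf a R i)
  | vw2b (i j : Fin (a - 1)) (h : (i : ℕ) + 1 < j ∨ (j : ℕ) + 1 < i) :
      VWRel a R hb (Ef a R i * Ef a R j) (Ef a R j * Ef a R i)
  | vw2c (i : Fin (a - 1)) (j : Fin a) (h1 : (j : ℕ) ≠ i) (h2 : (j : ℕ) ≠ (i : ℕ) + 1) :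
      VWRel a R hb (Ef a R i * Yf a R j) (Yf a R j * Ef a R i)
  | vw2d (i j : Fin a) : VWRel a R hb (Yf a R i * Yf a R j) (Yf a R j * Yf a R i)
  -- (VW3)
  | vw3a (i j : Fin (a - 1)) (h : (i : ℕ) + 1 < j ∨ (j : ℕ) + 1 < i) :
      VWRel a R hb (Sf a R i * Sf a R j) (Sf a R j * Sf a R i)
  | vw3b (i : ℕ) (h1 : i < a - 1) (h2 : i + 1 < a - 1) :
      VWRel a R hb (Sf a R ⟨i, h1⟩ * Sf a R ⟨i + 1, h2⟩ * Sf a R ⟨i, h1⟩)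
        (Sf a R ⟨i + 1, h2⟩ * Sf a R ⟨i, h1⟩ * Sf a R ⟨i + 1, h2⟩)
  | vw3c (i : Fin (a - 1)) (j : Fin a) (h1 : (j : ℕ) ≠ i) (h2 : (j : ℕ) ≠ (i : ℕ) + 1) :
      VWRel a R hb (Sf a R i * Yf a R j) (Yf a R j * Sf a R i)
  -- (VW4)
  | vw4a (i : ℕ) (h1 : i < a - 1) (h2 : i + 1 < a - 1) :
      VWRel a R hb (Ef a R ⟨i + 1, h2⟩ * Ef a R ⟨i, h1⟩ * Ef a R ⟨i + 1, h2⟩) (-Ef a R ⟨i + 1, h2⟩)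
  | vw4b (i : ℕ) (h1 : i < a - 1) (h2 : i + 1 < a - 1) :
      VWRel a R hb (Ef a R ⟨i, h1⟩ * Ef a R ⟨i + 1, h2⟩ * Ef a R ⟨i, h1⟩) (-Ef a R ⟨i, h1⟩)
  -- (VW5)
  | vw5a (i : Fin (a - 1)) : VWRel a R hb (Ef a R i * Sf a R i) (Ef a R i)
  | vw5b (i : Fin (a - 1)) : VWRel a R hb (Sf a R i * Ef a R i) (-Ef a R i)
  | vw5c (i : ℕ) (h1 : i < a - 1) (h2 : i + 1 < a - 1) :
      VWRel a R hb (Sf a R ⟨i, h1⟩ * Ef a R ⟨i + 1, h2⟩ * Ef a R ⟨i, h1⟩)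
        (Sf a R ⟨i + 1, h2⟩ * Ef a R ⟨i, h1⟩)
  | vw5d (i : ℕ) (h1 : i < a - 1) (h2 : i + 1 < a - 1) :
      VWRel a R hb (Sf a R ⟨i + 1, h2⟩ * Ef a R ⟨i, h1⟩ * Ef a R ⟨i + 1, h2⟩)
        (-(Sf a R ⟨i, h1⟩ * Ef a R ⟨i + 1, h2⟩))
  | vw5e (i : ℕ) (h1 : i < a - 1) (h2 : i + 1 < a - 1) :
      VWRel a R hb (Ef a R ⟨i + 1, h2⟩ * Ef a R ⟨i, h1⟩ * Sf a R ⟨i + 1, h2⟩)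
        (Ef a R ⟨i + 1, h2⟩ * Sf a R ⟨i, h1⟩)
  | vw5f (i : ℕ) (h1 : i < a - 1) (h2 : i + 1 < a - 1) :
      VWRel a R hb (Ef a R ⟨i, h1⟩ * Ef a R ⟨i + 1, h2⟩ * Sf a R ⟨i, h1⟩)
        (-(Ef a R ⟨i, h1⟩ * Sf a R ⟨i + 1, h2⟩))
  -- (VW6)
  | vw6 (i : Fin (a - 1)) : VWRel a R hb (Ef a R i * Ef a R i) 0
  -- (VW7)
  | vw7a (i : ℕ) (h1 : i < a - 1) (hy : i < a) (hy2 : i + 1 < a) :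
      VWRel a R hb (Sf a R ⟨i, h1⟩ * Yf a R ⟨i, hy⟩ - Yf a R ⟨i + 1, hy2⟩ * Sf a R ⟨i, h1⟩)
        (-(Hf a R hb * Ef a R ⟨i, h1⟩) - Hf a R hb)
  | vw7b (i : ℕ) (h1 : i < a - 1) (hy : i < a) (hy2 : i + 1 < a) :
      VWRel a R hb (Yf a R ⟨i, hy⟩ * Sf a R ⟨i, h1⟩ - Sf a R ⟨i, h1⟩ * Yf a R ⟨i + 1, hy2⟩)
        (Hf a R hb * Ef a R ⟨i, h1⟩ - Hf a R hb)
  -- (VW8)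
  | vw8 (k : ℕ) (hk : 1 ≤ k) (h0 : 0 < a - 1) (h0' : 0 < a) :
      VWRel a R hb (Ef a R ⟨0, h0⟩ * Yf a R ⟨0, h0'⟩ ^ k * Ef a R ⟨0, h0⟩) 0
  -- (VW9)
  | vw9a (i : ℕ) (h1 : i < a - 1) (hy : i < a) (hy2 : i + 1 < a) :
      VWRel a R hb (Ef a R ⟨i, h1⟩ * (Yf a R ⟨i + 1, hy2⟩ - Yf a R ⟨i, hy⟩))
        (Hf a R hb * Ef a R ⟨i, h1⟩)
  | vw9b (i : ℕ) (h1 : i < a - 1) (hy : i < a) (hy2 : i + 1 < a) :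
      VWRel a R hb ((Yf a R ⟨i + 1, hy2⟩ - Yf a R ⟨i, hy⟩) * Ef a R ⟨i, h1⟩)
        (-(Hf a R hb * Ef a R ⟨i, h1⟩))

/-- The affine VW superalgebra `A(R,hb)` on `a` strands: the quotient of the free
`R`-algebra on the generators by the two-sided ideal generated by the relations. -/
noncomputable abbrev VWA (a : ℕ) (R : Type) [CommRing R] (hb : R) : Type :=
  RingQuot (VWRel a R hb)

/-- The image of the generator `s_i` in `A(R,hb)`. -/
noncomputable def sg (a : ℕ) (R : Type) [CommRing R] (hb : R) (i : Fin (a - 1)) : VWA a R hb :=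
  RingQuot.mkAlgHom R (VWRel a R hb) (Sf a R i)

/-- The image of the generator `e_i` in `A(R,hb)`. -/
noncomputable def eg (a : ℕ) (R : Type) [CommRing R] (hb : R) (i : Fin (a - 1)) : VWA a R hb :=
  RingQuot.mkAlgHom R (VWRel a R hb) (Ef a R i)

/-- The image of the generator `y_j` in `A(R,hb)`. -/
noncomputable def yg (a : ℕ) (R : Type) [CommRing R] (hb : R) (j : Fin a) : VWA a R hb :=
  RingQuot.mkAlgHom R (VWRel a R hb) (Yf a R j)

/-- The deformed squared Vandermonde polynomial `D = ∏_{i<j} ((y_i − y_j)² − hb²)`. -/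
noncomputable def Dpoly (a : ℕ) (R : Type) [CommRing R] (hb : R) : MvPolynomial (Fin a) R :=
  ∏ p ∈ Finset.univ.filter (fun p : Fin a × Fin a => p.1 < p.2),
    ((MvPolynomial.X p.1 - MvPolynomial.X p.2) ^ 2 - MvPolynomial.C (hb ^ 2))

theorem yg_comm (a : ℕ) (R : Type) [CommRing R] (hb : R) (i j : Fin a) :
    yg a R hb i * yg a R hb j = yg a R hb j * yg a R hb i := by
  have h := RingQuot.mkAlgHom_rel R (VWRel.vw2d (a := a) (R := R) (hb := hb) i j)
  simpa only [yg, map_mul] using h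

/-- The subalgebra of `A(R,ħ)` generated by the `y_j`; it is commutative. -/
noncomputable def ygAdjoin (a : ℕ) (R : Type) [CommRing R] (hb : R) : Subalgebra R (VWA a R hb) :=
  Algebra.adjoin R (Set.range (yg a R hb))

noncomputable instance (a : ℕ) (R : Type) [CommRing R] (hb : R) :
    CommRing (ygAdjoin a R hb) :=
  { (ygAdjoin a R hb).toRing with
    mul_comm := (Algebra.isMulCommutative_adjoin R (s := Set.range (yg a R hb)) (by
      rintro x ⟨i, rfl⟩ y ⟨j, rfl⟩
      exact yg_comm a R hb i j)).is_comm.comm }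

/-- The `R`-algebra homomorphism `φ : R[y_1,…,y_a] → A(R,ħ)` sending the variable `y_j`
to the generator `y_j`. -/
noncomputable def vwphi (a : ℕ) (R : Type) [CommRing R] (hb : R) :
    MvPolynomial (Fin a) R →ₐ[R] VWA a R hb :=
  (ygAdjoin a R hb).val.comp
    (MvPolynomial.aeval (R := R)
      (fun j : Fin a =>
        (⟨yg a R hb j, Algebra.subset_adjoin ⟨j, rfl⟩⟩ : ygAdjoin a R hb)))

/-!
Moving `s_i` to the left through `φ(f)` one variable at a time, (VW7) turns `φ(f) s_i` into
`s_i φ(σ f)` (with `σ` the transposition of `y_i, y_{i+1}`), plus `-ħ φ(∂ f)` for the divided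
difference `∂ f = (f - σ f) / (y_i - y_{i+1})`, plus terms `ħ e_i φ(p)`. Every further variable
multiplied on the left of such a term can be moved next to `e_i`: `y_j` for `j ≠ i, i+1` commutes
with `e_i`, and (VW9) rewrites `y_{i+1} e_i` as `y_i e_i - ħ e_i`. Hence the error terms are
`y_i^j e_i φ(p_j)` with `j` below the degree. For `σ`-invariant `g` the divided difference
vanishes.
-/

namespace VW

open MvPolynomial

variable {a : ℕ} (R : Type) [CommRing R] (hb : R)

theorem vwphi_X (j : Fin a) : vwphi a R hb (X j) = yg a R hb j := by
  simp [vwphi]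

variable {i : ℕ} (hi : i < a - 1)

def strand : Fin a := ⟨i, hi.trans_le (Nat.sub_le a 1)⟩

def nextStrand : Fin a := ⟨i + 1, Nat.add_lt_of_lt_sub hi⟩

def strandSwap : Equiv.Perm (Fin a) := Equiv.swap (strand hi) (nextStrand hi)

theorem strand_ne_nextStrand : strand hi ≠ nextStrand hi := by
  simp [strand, nextStrand]

theorem sg_mul_yg_nextStrand :
    sg a R hb ⟨i, hi⟩ * yg a R hb (nextStrand hi) =
      yg a R hb (strand hi) * sg a R hb ⟨i, hi⟩ - hb • eg a R hb ⟨i, hi⟩ + hb • 1 := by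
  have h := RingQuot.mkAlgHom_rel R (VWRel.vw7b (hb := hb) i hi (by omega) (by omega))
  simp only [map_sub, map_mul, Hf, Algebra.algebraMap_eq_smul_one, map_one,
    smul_mul_assoc, one_mul, map_smul, sub_eq_iff_eq_add'] at h
  simp only [sg, yg, eg, strand, nextStrand, h]
  abel

theorem sg_mul_yg_strand :
    sg a R hb ⟨i, hi⟩ * yg a R hb (strand hi) =
      yg a R hb (nextStrand hi) * sg a R hb ⟨i, hi⟩ - hb • eg a R hb ⟨i, hi⟩ -
        hb • 1 := by
  have h := RingQuot.mkAlgHom_rel R (VWRel.vw7a (hb := hb) i hi (by omega) (by omega))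
  simp only [map_sub, map_neg, map_mul, Hf, Algebra.algebraMap_eq_smul_one, map_one,
    smul_mul_assoc, one_mul, map_smul, sub_eq_iff_eq_add] at h
  simp only [sg, yg, eg, strand, nextStrand, h]
  abel

theorem yg_nextStrand_mul_eg :
    yg a R hb (nextStrand hi) * eg a R hb ⟨i, hi⟩ =
      yg a R hb (strand hi) * eg a R hb ⟨i, hi⟩ - hb • eg a R hb ⟨i, hi⟩ := by
  have h := RingQuot.mkAlgHom_rel R (VWRel.vw9b (hb := hb) i hi (by omega) (by omega))
  simp only [map_sub, map_neg, map_mul, Hf, Algebra.algebraMap_eq_smul_one,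
    smul_mul_assoc, one_mul, map_smul, sub_mul, sub_eq_iff_eq_add] at h
  simp only [yg, eg, strand, nextStrand, h]
  abel

variable {hi} in
theorem sg_mul_yg_of_ne {j : Fin a} (hj : j ≠ strand hi) (hj' : j ≠ nextStrand hi) :
    sg a R hb ⟨i, hi⟩ * yg a R hb j = yg a R hb j * sg a R hb ⟨i, hi⟩ := by
  have h := RingQuot.mkAlgHom_rel R (VWRel.vw3c (hb := hb) ⟨i, hi⟩ j
    (fun h => hj (Fin.ext h)) (fun h => hj' (Fin.ext h)))
  simpa only [map_mul, sg, yg] using h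

variable {hi} in
theorem eg_mul_yg_of_ne {j : Fin a} (hj : j ≠ strand hi) (hj' : j ≠ nextStrand hi) :
    eg a R hb ⟨i, hi⟩ * yg a R hb j = yg a R hb j * eg a R hb ⟨i, hi⟩ := by
  have h := RingQuot.mkAlgHom_rel R (VWRel.vw2c (hb := hb) ⟨i, hi⟩ j
    (fun h => hj (Fin.ext h)) (fun h => hj' (Fin.ext h)))
  simpa only [map_mul, eg, yg] using h

def eSpan (n : ℕ) : Submodule R (VWA a R hb) :=
  Submodule.span R
    {x | ∃ j < n, ∃ p,
      x = yg a R hb (strand hi) ^ j * eg a R hb ⟨i, hi⟩ * vwphi a R hb p}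

variable {R hb hi}

theorem pow_mul_eg_mul_mem_eSpan {j n : ℕ} (hj : j < n) (p : MvPolynomial (Fin a) R) :
    yg a R hb (strand hi) ^ j * eg a R hb ⟨i, hi⟩ * vwphi a R hb p ∈ eSpan R hb hi n :=
  Submodule.subset_span ⟨j, hj, p, rfl⟩

theorem eSpan_mono {n m : ℕ} (h : n ≤ m) : eSpan R hb hi n ≤ eSpan R hb hi m :=
  Submodule.span_mono fun _ ⟨j, hj, p, hx⟩ => ⟨j, hj.trans_le h, p, hx⟩

theorem mul_mem_eSpan {z : VWA a R hb} {n m : ℕ}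
    (hz : ∀ j < n, ∀ p,
      z * (yg a R hb (strand hi) ^ j * eg a R hb ⟨i, hi⟩ * vwphi a R hb p) ∈ eSpan R hb hi m)
    {x : VWA a R hb} (hx : x ∈ eSpan R hb hi n) : z * x ∈ eSpan R hb hi m := by
  have : eSpan R hb hi n ≤ (eSpan R hb hi m).comap (LinearMap.mulLeft R z) :=
    Submodule.span_le.mpr fun _ ⟨j, hj, p, hx⟩ => hx ▸ hz j hj p
  exact this hx

theorem yg_strand_mul_mem_eSpan {n : ℕ} {x : VWA a R hb} (hx : x ∈ eSpan R hb hi n) :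
    yg a R hb (strand hi) * x ∈ eSpan R hb hi (n + 1) := by
  refine mul_mem_eSpan (fun j hj p => ?_) hx
  rw [← mul_assoc, ← mul_assoc, ← pow_succ']
  exact pow_mul_eg_mul_mem_eSpan (Nat.succ_lt_succ hj) p

theorem yg_mul_mem_eSpan_of_ne {j : Fin a} (hj : j ≠ strand hi) (hj' : j ≠ nextStrand hi)
    {n : ℕ} {x : VWA a R hb} (hx : x ∈ eSpan R hb hi n) :
    yg a R hb j * x ∈ eSpan R hb hi n := by
  refine mul_mem_eSpan (fun k hk p => ?_) hx
  have hcomm : Commute (yg a R hb j) (yg a R hb (strand hi) ^ k * eg a R hb ⟨i, hi⟩) :=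
    (Commute.pow_right (yg_comm a R hb j (strand hi)) k).mul_right
      (eg_mul_yg_of_ne R hb hj hj').symm
  rw [← mul_assoc, hcomm.eq, mul_assoc, ← vwphi_X R hb j, ← map_mul]
  exact pow_mul_eg_mul_mem_eSpan hk _

theorem yg_nextStrand_mul_mem_eSpan {n : ℕ} {x : VWA a R hb} (hx : x ∈ eSpan R hb hi n) :
    yg a R hb (nextStrand hi) * x ∈ eSpan R hb hi (n + 1) := by
  refine mul_mem_eSpan (fun j hj p => ?_) hx
  have hcomm : Commute (yg a R hb (nextStrand hi)) (yg a R hb (strand hi) ^ j) :=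
    Commute.pow_right (yg_comm a R hb _ _) j
  rw [← mul_assoc, ← mul_assoc, hcomm.eq, mul_assoc _ (yg a R hb _), yg_nextStrand_mul_eg,
    mul_sub, ← mul_assoc, ← pow_succ, mul_smul_comm, sub_mul, smul_mul_assoc]
  exact sub_mem (pow_mul_eg_mul_mem_eSpan (Nat.succ_lt_succ hj) p)
    (Submodule.smul_mem _ _ (eSpan_mono n.le_succ (pow_mul_eg_mul_mem_eSpan hj p)))

theorem exists_eq_sum_of_mem_eSpan {n : ℕ} {x : VWA a R hb} (hx : x ∈ eSpan R hb hi n) :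
    ∃ p : ℕ → MvPolynomial (Fin a) R, x = ∑ j ∈ Finset.range n,
      yg a R hb (strand hi) ^ j * eg a R hb ⟨i, hi⟩ * vwphi a R hb (p j) := by
  induction hx using Submodule.span_induction with
  | mem x hx =>
    obtain ⟨j, hj, p, rfl⟩ := hx
    refine ⟨Pi.single j p, ?_⟩
    rw [Finset.sum_eq_single_of_mem j (Finset.mem_range.mpr hj) fun k _ hk => by simp [hk]]
    simp
  | zero => exact ⟨0, by simp⟩
  | add x y _ _ hx hy =>
    obtain ⟨p, rfl⟩ := hx
    obtain ⟨q, rfl⟩ := hy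
    exact ⟨p + q, by simp [mul_add, Finset.sum_add_distrib]⟩
  | smul c x _ hx =>
    obtain ⟨p, rfl⟩ := hx
    exact ⟨c • p, by simp [Finset.smul_sum]⟩

theorem eg_mul_mem_eSpan (n : ℕ) (p : MvPolynomial (Fin a) R) :
    eg a R hb ⟨i, hi⟩ * vwphi a R hb p ∈ eSpan R hb hi (n + 1) := by
  simpa using pow_mul_eg_mul_mem_eSpan (hi := hi) n.succ_pos p

variable (R hb hi) in
/-- `q` stands for the divided difference `(f - σ f) / (y_i - y_{i+1})`. -/
def CommutesUpTo (n : ℕ) (f : MvPolynomial (Fin a) R) : Prop :=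
  ∃ q, (X (strand hi) - X (nextStrand hi)) * q = f - rename (strandSwap hi) f ∧
    vwphi a R hb f * sg a R hb ⟨i, hi⟩ -
      sg a R hb ⟨i, hi⟩ * vwphi a R hb (rename (strandSwap hi) f) + hb • vwphi a R hb q ∈
        eSpan R hb hi n

theorem commutesUpTo_C (c : R) : CommutesUpTo R hb hi 0 (C c) :=
  ⟨0, by simp, by simp [← algebraMap_eq, Algebra.commutes]⟩

theorem CommutesUpTo.mono {n m : ℕ} {f : MvPolynomial (Fin a) R} (hf : CommutesUpTo R hb hi n f)
    (h : n ≤ m) : CommutesUpTo R hb hi m f :=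
  let ⟨q, hq, hmem⟩ := hf
  ⟨q, hq, eSpan_mono h hmem⟩

theorem CommutesUpTo.add {n : ℕ} {f g : MvPolynomial (Fin a) R} (hf : CommutesUpTo R hb hi n f)
    (hg : CommutesUpTo R hb hi n g) : CommutesUpTo R hb hi n (f + g) := by
  obtain ⟨q, hq, hmem⟩ := hf
  obtain ⟨q', hq', hmem'⟩ := hg
  refine ⟨q + q', by rw [mul_add, hq, hq', map_add]; ring, ?_⟩
  convert add_mem hmem hmem' using 1
  simp only [map_add, add_mul, mul_add, smul_add]
  abel

theorem CommutesUpTo.X_strand_mul {n : ℕ} {f : MvPolynomial (Fin a) R}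
    (hf : CommutesUpTo R hb hi n f) : CommutesUpTo R hb hi (n + 1) (X (strand hi) * f) := by
  obtain ⟨q, hq, hmem⟩ := hf
  have hswap : rename (strandSwap hi) (X (strand hi) * f) =
      X (nextStrand hi) * rename (strandSwap hi) f := by
    simp [strandSwap]
  refine ⟨X (strand hi) * q + rename (strandSwap hi) f, ?_, ?_⟩
  · rw [hswap]
    linear_combination X (strand hi) * hq
  · have key : vwphi a R hb (X (strand hi) * f) * sg a R hb ⟨i, hi⟩ -
        sg a R hb ⟨i, hi⟩ * vwphi a R hb (rename (strandSwap hi) (X (strand hi) * f)) +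
        hb • vwphi a R hb (X (strand hi) * q + rename (strandSwap hi) f) =
        yg a R hb (strand hi) * (vwphi a R hb f * sg a R hb ⟨i, hi⟩ -
          sg a R hb ⟨i, hi⟩ * vwphi a R hb (rename (strandSwap hi) f) + hb • vwphi a R hb q) +
          hb • (eg a R hb ⟨i, hi⟩ * vwphi a R hb (rename (strandSwap hi) f)) := by
      simp only [hswap, map_mul, map_add, vwphi_X]
      rw [← mul_assoc (sg a R hb _), sg_mul_yg_nextStrand]
      simp only [mul_add, mul_sub, add_mul, sub_mul, smul_add, smul_mul_assoc, mul_smul_comm,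
        mul_assoc, one_mul]
      abel
    rw [key]
    exact add_mem (yg_strand_mul_mem_eSpan hmem)
      (Submodule.smul_mem _ _ (eg_mul_mem_eSpan n _))

theorem CommutesUpTo.X_nextStrand_mul {n : ℕ} {f : MvPolynomial (Fin a) R}
    (hf : CommutesUpTo R hb hi n f) : CommutesUpTo R hb hi (n + 1) (X (nextStrand hi) * f) := by
  obtain ⟨q, hq, hmem⟩ := hf
  have hswap : rename (strandSwap hi) (X (nextStrand hi) * f) =
      X (strand hi) * rename (strandSwap hi) f := by
    simp [strandSwap]
  refine ⟨X (nextStrand hi) * q - rename (strandSwap hi) f, ?_, ?_⟩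
  · rw [hswap]
    linear_combination X (nextStrand hi) * hq
  · have key : vwphi a R hb (X (nextStrand hi) * f) * sg a R hb ⟨i, hi⟩ -
        sg a R hb ⟨i, hi⟩ * vwphi a R hb (rename (strandSwap hi) (X (nextStrand hi) * f)) +
        hb • vwphi a R hb (X (nextStrand hi) * q - rename (strandSwap hi) f) =
        yg a R hb (nextStrand hi) * (vwphi a R hb f * sg a R hb ⟨i, hi⟩ -
          sg a R hb ⟨i, hi⟩ * vwphi a R hb (rename (strandSwap hi) f) + hb • vwphi a R hb q) +
          hb • (eg a R hb ⟨i, hi⟩ * vwphi a R hb (rename (strandSwap hi) f)) := by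
      simp only [hswap, map_mul, map_sub, vwphi_X]
      rw [← mul_assoc (sg a R hb _), sg_mul_yg_strand]
      simp only [mul_add, mul_sub, sub_mul, smul_sub, smul_mul_assoc, mul_smul_comm, mul_assoc,
        one_mul]
      abel
    rw [key]
    exact add_mem (yg_nextStrand_mul_mem_eSpan hmem)
      (Submodule.smul_mem _ _ (eg_mul_mem_eSpan n _))

theorem CommutesUpTo.X_mul_of_ne {n : ℕ} {f : MvPolynomial (Fin a) R}
    (hf : CommutesUpTo R hb hi n f) {j : Fin a} (hj : j ≠ strand hi) (hj' : j ≠ nextStrand hi) :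
    CommutesUpTo R hb hi n (X j * f) := by
  obtain ⟨q, hq, hmem⟩ := hf
  have hswap : rename (strandSwap hi) (X j * f) = X j * rename (strandSwap hi) f := by
    simp [strandSwap, Equiv.swap_apply_of_ne_of_ne hj hj']
  refine ⟨X j * q, ?_, ?_⟩
  · rw [hswap]
    linear_combination X j * hq
  · have key : vwphi a R hb (X j * f) * sg a R hb ⟨i, hi⟩ -
        sg a R hb ⟨i, hi⟩ * vwphi a R hb (rename (strandSwap hi) (X j * f)) +
        hb • vwphi a R hb (X j * q) =
        yg a R hb j * (vwphi a R hb f * sg a R hb ⟨i, hi⟩ -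
          sg a R hb ⟨i, hi⟩ * vwphi a R hb (rename (strandSwap hi) f) +
            hb • vwphi a R hb q) := by
      simp only [hswap, map_mul, vwphi_X]
      rw [← mul_assoc (sg a R hb _), sg_mul_yg_of_ne R hb hj hj']
      simp only [mul_add, mul_sub, mul_smul_comm, mul_assoc]
    rw [key]
    exact yg_mul_mem_eSpan_of_ne hj hj' hmem

theorem CommutesUpTo.X_mul {n : ℕ} {f : MvPolynomial (Fin a) R} (hf : CommutesUpTo R hb hi n f)
    (j : Fin a) : CommutesUpTo R hb hi (n + 1) (X j * f) := by
  by_cases hj : j = strand hi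
  · exact hj ▸ hf.X_strand_mul
  by_cases hj' : j = nextStrand hi
  · exact hj' ▸ hf.X_nextStrand_mul
  exact (hf.X_mul_of_ne hj hj').mono n.le_succ

theorem CommutesUpTo.X_pow_mul {n : ℕ} {f : MvPolynomial (Fin a) R}
    (hf : CommutesUpTo R hb hi n f) (j : Fin a) (k : ℕ) :
    CommutesUpTo R hb hi (k + n) (X j ^ k * f) := by
  induction k with
  | zero => simpa using hf
  | succ k ih => simpa [pow_succ', mul_assoc, Nat.succ_add] using ih.X_mul j

theorem commutesUpTo_monomial (d : Fin a →₀ ℕ) (c : R) :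
    CommutesUpTo R hb hi (d.sum fun _ e => e) (monomial d c) := by
  induction d using Finsupp.induction with
  | zero => simpa using commutesUpTo_C c
  | single_add j k d _ _ ih =>
    rw [monomial_single_add, Finsupp.sum_add_index' (fun _ => rfl) (fun _ _ _ => rfl),
      Finsupp.sum_single_index rfl]
    exact ih.X_pow_mul j k

theorem commutesUpTo_totalDegree (f : MvPolynomial (Fin a) R) :
    CommutesUpTo R hb hi f.totalDegree f := by
  have hmon : ∀ d ∈ f.support, CommutesUpTo R hb hi f.totalDegree (monomial d (coeff d f)) :=
    fun d hd => (commutesUpTo_monomial d _).mono (le_totalDegree hd)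
  have hzero : CommutesUpTo R hb hi f.totalDegree 0 :=
    ⟨0, by simp, by simp⟩
  have hsum := Finset.sum_induction _ (CommutesUpTo R hb hi f.totalDegree)
    (fun _ _ => CommutesUpTo.add) hzero hmon
  rwa [support_sum_monomial_coeff] at hsum

theorem vwphi_mul_sg_of_rename_eq [IsDomain R] {f : MvPolynomial (Fin a) R}
    (hf : rename (strandSwap hi) f = f) :
    ∃ p : ℕ → MvPolynomial (Fin a) R,
      vwphi a R hb f * sg a R hb ⟨i, hi⟩ = sg a R hb ⟨i, hi⟩ * vwphi a R hb f +
        ∑ j ∈ Finset.range f.totalDegree,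
          yg a R hb (strand hi) ^ j * eg a R hb ⟨i, hi⟩ * vwphi a R hb (p j) := by
  obtain ⟨q, hq, hmem⟩ := commutesUpTo_totalDegree (hb := hb) (hi := hi) f
  have hq0 : q = 0 := by
    rw [hf, sub_self, mul_eq_zero, sub_eq_zero] at hq
    exact hq.resolve_left (X_injective.ne (strand_ne_nextStrand hi))
  rw [hf, hq0, map_zero, smul_zero, add_zero] at hmem
  obtain ⟨p, hp⟩ := exists_eq_sum_of_mem_eSpan hmem
  exact ⟨p, by rw [← hp, add_sub_cancel]⟩

end VW

/-- in `A_ħ`, if `g` is invariant under the transposition of the variables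
`y_i, y_{i+1}`, then `φ(g)·s_i = s_i·φ(g) + Σ_{j<N} y_i^j·e_i·φ(p_j)` for some polynomials
`p_j`, with `N` the total degree of `g`. (Indices are 0-based.) -/
theorem statement12 (a : ℕ) (i : ℕ) (hi : i < a - 1)
    (g : MvPolynomial (Fin a) (Polynomial ℂ))
    (hg : MvPolynomial.rename
        (Equiv.swap (⟨i, by omega⟩ : Fin a) (⟨i + 1, by omega⟩ : Fin a)) g = g) :
    ∃ p : ℕ → MvPolynomial (Fin a) (Polynomial ℂ),
      vwphi a (Polynomial ℂ) Polynomial.X g * sg a (Polynomial ℂ) Polynomial.X ⟨i, hi⟩ =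
        sg a (Polynomial ℂ) Polynomial.X ⟨i, hi⟩ * vwphi a (Polynomial ℂ) Polynomial.X g +
          ∑ j ∈ Finset.range g.totalDegree,
            yg a (Polynomial ℂ) Polynomial.X (⟨i, by omega⟩ : Fin a) ^ j * eg a (Polynomial ℂ) Polynomial.X ⟨i, hi⟩ *
              vwphi a (Polynomial ℂ) Polynomial.X (p j) :=
  VW.vwphi_mul_sg_of_rename_eq hg
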